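/- Let a > 0 and A_T ∈ ℝ. Any continuously differentiable solution A on [0,T] of A' + 2A² = −a with A(T) = A_T exists only if T < (1/√(2a))·(π/2 − arctan(√(2/a)·A_T)). Equivalently, if T ≥ (1/√(2a))·(π/2 − arctan(√(2/a)·A_T)), then there is no C¹ solution of this terminal value problem on all of [0,T]. -/

import Mathlib

/-!
With k = √(b/a), the substitution A = tan(θ)/k turns A' = -a - bA² into θ' = -√(ab), so
arctan(k A(t)) + √(ab) t is conserved along a solution. Comparing t = 0 with t = T and using
arctan < π/2 bounds √(ab) T by π/2 - arctan(k A(T)).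
-/

open Real Set

theorem sqrt_mul_eq_mul_sqrt_div {a : ℝ} (b : ℝ) (ha : 0 < a) :
    √(b * a) = a * √(b / a) := by
  rw [show b * a = a ^ 2 * (b / a) by field_simp, Real.sqrt_mul (by positivity), Real.sqrt_sq ha.le]

theorem hasDerivAt_riccati_arctan_invariant {a b t : ℝ} {A : ℝ → ℝ} (ha : 0 < a) (hb : 0 ≤ b)
    (hA : HasDerivAt A (-a - b * A t ^ 2) t) :
    HasDerivAt (fun s => arctan (√(b / a) * A s) + √(b * a) * s) 0 t := by
  refine (((hA.const_mul _).arctan).add ((hasDerivAt_id' t).const_mul _)).congr_deriv ?_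
  have hk : √(b / a) ^ 2 = b / a := Real.sq_sqrt (by positivity)
  rw [sqrt_mul_eq_mul_sqrt_div b ha, mul_pow, hk]
  field_simp
  ring

theorem riccati_arctan_invariant_eq {a b T : ℝ} {A : ℝ → ℝ} (ha : 0 < a) (hb : 0 ≤ b)
    (hT : 0 ≤ T) (hA : ∀ t ∈ Icc 0 T, HasDerivAt A (-a - b * A t ^ 2) t) :
    arctan (√(b / a) * A T) + √(b * a) * T = arctan (√(b / a) * A 0) := by
  have hderiv t (ht : t ∈ Icc 0 T) := hasDerivAt_riccati_arctan_invariant ha hb (hA t ht)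
  have hconst := constant_of_has_deriv_right_zero
    (fun t ht => (hderiv t ht).continuousAt.continuousWithinAt)
    (fun t ht => (hderiv t (Ico_subset_Icc_self ht)).hasDerivWithinAt) T ⟨hT, le_rfl⟩
  simpa using hconst

theorem riccati_lifespan_lt {a b T : ℝ} {A : ℝ → ℝ} (ha : 0 < a) (hb : 0 ≤ b)
    (hT : 0 ≤ T) (hA : ∀ t ∈ Icc 0 T, HasDerivAt A (-a - b * A t ^ 2) t) :
    √(b * a) * T < π / 2 - arctan (√(b / a) * A T) := by
  have := riccati_arctan_invariant_eq ha hb hT hA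
  linarith [arctan_lt_pi_div_two (√(b / a) * A 0)]

theorem stmt_2 (a T A_T : ℝ) (ha : 0 < a)
    (hT : (1 / Real.sqrt (2 * a)) * (Real.pi / 2 - Real.arctan (Real.sqrt (2 / a) * A_T)) ≤ T) :
    ¬ ∃ A : ℝ → ℝ, ContDiffOn ℝ 1 A (Set.Icc 0 T) ∧
        (∀ t ∈ Set.Icc (0 : ℝ) T, HasDerivAt A (-a - 2 * (A t) ^ 2) t) ∧
        A T = A_T := by
  rintro ⟨A, -, hA, rfl⟩
  have hc : 0 < √(2 * a) := by positivity
  have hT₀ : 0 ≤ T :=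
    (mul_pos (by positivity) (sub_pos.2 (arctan_lt_pi_div_two _))).le.trans hT
  have hlt := riccati_lifespan_lt ha zero_le_two hT₀ hA
  rw [one_div_mul_eq_div, div_le_iff₀' hc] at hT
  linarith
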